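/- Let P ⊆ R = K[x] be a maximal ideal and I a P-primary ideal. If operators D_1,...,D_m span the local dual space D_P[I] as a κ(P)-vector space, then any preimages N_1,...,N_m ∈ W_R of the D_i under the quotient map W_R → W_{κ(P)} form a set of Noetherian operators for I: for all f ∈ R, f ∈ I if and only if N_i • f ∈ P for all i. -/

import Mathlib

set_option synthInstance.maxHeartbeats 400000

open MvPolynomial

/-- The differential operator `∂^α` on `A[x₁,…,xₙ]`. -/
noncomputable def diffOp {A : Type*} [CommRing A] {n : ℕ} (α : Fin n →₀ ℕ) :
    Module.End A (MvPolynomial (Fin n) A) :=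
  (List.ofFn (fun i : Fin n => ((pderiv i : Derivation A (MvPolynomial (Fin n) A)
      (MvPolynomial (Fin n) A)).toLinearMap ^ (α i)))).prod

/-- The action `N • f = ∑ c_α (∂^α • f)` of `N = ∑ c_α ∂^α ∈ W_R`. -/
noncomputable def wAct {A : Type*} [CommRing A] {n : ℕ}
    (N : (Fin n →₀ ℕ) →₀ MvPolynomial (Fin n) A) (f : MvPolynomial (Fin n) A) :
    MvPolynomial (Fin n) A :=
  N.sum fun α c => c * diffOp α f

/-- The pairing `⟨D, f⟩_{κ(P)}` for `D ∈ W_{κ(P)} = κ(P)[∂]` and `f ∈ R`. -/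
noncomputable def lpair {K : Type*} [Field K] {n : ℕ}
    (P : Ideal (MvPolynomial (Fin n) K))
    (D : (Fin n →₀ ℕ) →₀ (MvPolynomial (Fin n) K ⧸ P))
    (f : MvPolynomial (Fin n) K) : MvPolynomial (Fin n) K ⧸ P :=
  D.sum fun α c => c * Ideal.Quotient.mk P (diffOp α f)

/-- The local dual space `D_P[J]`. -/
def localDual {K : Type*} [Field K] {n : ℕ}
    (P J : Ideal (MvPolynomial (Fin n) K)) :
    Set ((Fin n →₀ ℕ) →₀ (MvPolynomial (Fin n) K ⧸ P)) :=
  {D | ∀ f ∈ J, lpair P D f = 0}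

/-!
The forward implication is the definition of `D_P[I]`. For the converse take `m` with
`P ^ m ≤ I`. As `κ(P)/K` is separable, formal smoothness lifts `κ(P)` to a coefficient field of
`R ⧸ P ^ (m + 1)`; its representatives `s c` satisfy `∂ⱼ (s c) ∈ P ^ m`, so by the Leibniz rule
multiplication by `s c` acts on the Taylor coefficients `(∂^α g mod P)_{|α| < m}` as
multiplication by `c`. Hence the Taylor coefficients of elements of `I` form a `κ(P)`-subspace.
Every `κ(P)`-linear functional on Taylor coefficients is the pairing with some `D ∈ W_{κ(P)}`, so
if `f` is annihilated by `D_P[I]`, it has the Taylor coefficients of some `g ∈ I`. Finally, the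
homotopy `t ↦ h(s + t (x - s))` (integrated using characteristic zero) shows, by induction on
`m`, that `f - g`, whose derivatives of order `< m` lie in `P`, lies in `P ^ m ⊆ I`.
-/

theorem List.prod_ofFn_mul_of_commute {M : Type*} [Monoid M] {k : ℕ} (f g : Fin k → M)
    (hfg : ∀ i j, Commute (f i) (g j)) :
    (List.ofFn fun i => f i * g i).prod = (List.ofFn f).prod * (List.ofFn g).prod := by
  induction k with
  | zero => simp
  | succ k ih =>
    have hg0 : Commute (g 0) (List.ofFn fun i : Fin k => f i.succ).prod :=
      Commute.list_prod_right _ _ fun y hy => by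
        obtain ⟨i, rfl⟩ := List.mem_ofFn.1 hy
        exact (hfg i.succ 0).symm
    simp only [List.ofFn_succ, List.prod_cons, ih _ _ fun i j => hfg _ _]
    rw [mul_assoc, mul_assoc, ← mul_assoc (g 0), hg0.eq, mul_assoc]

theorem List.prod_ofFn_eq_apply {M : Type*} [Monoid M] {k : ℕ} (g : Fin k → M) (i : Fin k)
    (hg : ∀ j ≠ i, g j = 1) : (List.ofFn g).prod = g i := by
  induction k with
  | zero => exact i.elim0
  | succ k ih =>
    rw [List.ofFn_succ, List.prod_cons]
    rcases Fin.eq_zero_or_eq_succ i with rfl | ⟨i, rfl⟩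
    · rw [List.prod_eq_one fun x hx => ?_, mul_one]
      obtain ⟨j, rfl⟩ := List.mem_ofFn.1 hx
      exact hg _ j.succ_ne_zero
    · rw [hg 0 (Fin.succ_ne_zero i).symm, one_mul]
      exact ih _ i fun j hj => hg _ (by simpa using hj)

theorem Derivation.map_mem_pow {R S : Type*} [CommRing R] [CommRing S] [Algebra R S]
    (D : Derivation R S S) {J : Ideal S} {k : ℕ} {x : S} (hx : x ∈ J ^ (k + 1)) :
    D x ∈ J ^ k := by
  induction k generalizing x with
  | zero => simp
  | succ k ih =>
    rw [pow_succ] at hx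
    refine Submodule.mul_induction_on hx (fun a ha b hb => ?_) fun a b ha hb => ?_
    · rw [D.leibniz, smul_eq_mul, smul_eq_mul, mul_comm b]
      refine add_mem (Ideal.mul_mem_right _ _ ha) ?_
      rw [pow_succ]
      exact Ideal.mul_mem_mul (ih ha) hb
    · rw [map_add]; exact add_mem ha hb

@[elab_as_elim]
theorem Finsupp.induction_add_single_one {ι : Type*} {motive : (ι →₀ ℕ) → Prop}
    (zero : motive 0) (add_single : ∀ α i, motive α → motive (α + Finsupp.single i 1))
    (α : ι →₀ ℕ) : motive α := by
  induction α using Finsupp.induction with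
  | zero => exact zero
  | single_add i k α _ hk hα =>
    clear hk
    rw [add_comm]
    induction k with
    | zero => simpa using hα
    | succ k ih => rw [Finsupp.single_add, ← add_assoc]; exact add_single _ _ ih

theorem Polynomial.eval_one_sub_coeff_zero_mem {R : Type*} [CommRing R] [Algebra ℚ R]
    {J : Ideal R} {q : Polynomial R} (hq : ∀ j, (Polynomial.derivative q).coeff j ∈ J) :
    q.eval 1 - q.coeff 0 ∈ J := by
  have hcoeff (j : ℕ) : q.coeff (j + 1) ∈ J := by
    have hu : algebraMap ℚ R (j + 1 : ℚ)⁻¹ * ((j : R) + 1) = 1 := by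
      rw [show (j : R) + 1 = algebraMap ℚ R (j + 1) by simp, ← map_mul,
        inv_mul_cancel₀ (by positivity), map_one]
    have h := J.mul_mem_left (algebraMap ℚ R (j + 1 : ℚ)⁻¹) (hq j)
    rwa [Polynomial.coeff_derivative, mul_left_comm, hu, mul_one] at h
  rw [Polynomial.eval_eq_sum_range, Finset.sum_range_succ', add_sub_assoc]
  simpa using sum_mem fun j _ => hcoeff j

theorem Ideal.exists_algHom_lift_quotient_pow {K R : Type*} [CommRing K] [CommRing R]
    [Algebra K R] (P : Ideal R) [Algebra.FormallySmooth K (R ⧸ P)] (m : ℕ) :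
    ∃ σ : (R ⧸ P) →ₐ[K] R ⧸ P ^ (m + 1), ∀ c,
      Ideal.Quotient.factor (Ideal.pow_le_self m.succ_ne_zero) (σ c) = c := by
  let J := P.map (Ideal.Quotient.mkₐ K (P ^ (m + 1)))
  have hJ : IsNilpotent J := ⟨m + 1, by
    rw [← Ideal.map_pow]; exact Ideal.map_quotient_self _⟩
  let e := DoubleQuot.quotQuotEquivQuotOfLEₐ K (Ideal.pow_le_self m.succ_ne_zero (I := P))
  let σ := Algebra.FormallySmooth.lift J hJ e.symm.toAlgHom
  refine ⟨σ, fun c => ?_⟩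
  obtain ⟨x, hx⟩ := Ideal.Quotient.mk_surjective (σ c)
  calc Ideal.Quotient.factor _ (σ c) = e (Ideal.Quotient.mk J (σ c)) := by rw [← hx]; rfl
    _ = c := by rw [Algebra.FormallySmooth.mk_lift]; exact e.apply_symm_apply c

namespace NoetherianOperators

section DiffOp

variable {A : Type*} [CommRing A] {n : ℕ}

theorem pderiv_comm (i j : Fin n) (f : MvPolynomial (Fin n) A) :
    pderiv i (pderiv j f) = pderiv j (pderiv i f) := by
  have h : ⁅pderiv i, pderiv j⁆ = (0 : Derivation A (MvPolynomial (Fin n) A) _) :=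
    derivation_ext fun k => by
      rw [Derivation.commutator_apply, pderiv_X, pderiv_X, Pi.single_apply, Pi.single_apply]
      split_ifs <;> simp
  have := congr($h f)
  rwa [Derivation.commutator_apply, Derivation.zero_apply, sub_eq_zero] at this

@[simp]
theorem diffOp_zero : (diffOp 0 : Module.End A (MvPolynomial (Fin n) A)) = 1 :=
  List.prod_eq_one fun x hx => by
    obtain ⟨i, rfl⟩ := List.mem_ofFn.1 hx
    simp

theorem diffOp_add (α β : Fin n →₀ ℕ) :
    (diffOp (α + β) : Module.End A (MvPolynomial (Fin n) A)) = diffOp α * diffOp β := by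
  simp only [diffOp, Finsupp.add_apply, pow_add]
  refine List.prod_ofFn_mul_of_commute _ _ fun i j => Commute.pow_pow ?_ _ _
  exact LinearMap.ext fun f => pderiv_comm i j f

theorem diffOp_single_one (i : Fin n) :
    (diffOp (Finsupp.single i 1) : Module.End A (MvPolynomial (Fin n) A)) =
      (pderiv i).toLinearMap := by
  rw [diffOp, List.prod_ofFn_eq_apply _ i fun j hj => by simp [hj.symm]]
  simp

theorem diffOp_add_single_one (α : Fin n →₀ ℕ) (i : Fin n) (f : MvPolynomial (Fin n) A) :
    diffOp (α + Finsupp.single i 1) f = diffOp α (pderiv i f) := by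
  rw [diffOp_add, Module.End.mul_apply, diffOp_single_one]
  rfl

variable {P : Ideal (MvPolynomial (Fin n) A)}

theorem diffOp_mem_pow_sub_degree {k : ℕ} {f : MvPolynomial (Fin n) A} (hf : f ∈ P ^ k)
    (α : Fin n →₀ ℕ) : diffOp α f ∈ P ^ (k - α.degree) := by
  induction α using Finsupp.induction_add_single_one generalizing k f with
  | zero => simpa using hf
  | add_single α i ih =>
    rw [diffOp_add_single_one, map_add, Finsupp.degree_single]
    rcases k with _ | k
    · simp
    · rw [show k + 1 - (α.degree + 1) = k - α.degree by omega]
      exact ih ((pderiv i).map_mem_pow hf)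

theorem diffOp_mul_sub_mem {m : ℕ} {s : MvPolynomial (Fin n) A} (hs : ∀ j, pderiv j s ∈ P ^ m)
    (α : Fin n →₀ ℕ) (g : MvPolynomial (Fin n) A) :
    diffOp α (s * g) - s * diffOp α g ∈ P ^ (m + 1 - α.degree) := by
  induction α using Finsupp.induction_add_single_one generalizing g with
  | zero => simp
  | add_single α i ih =>
    rw [diffOp_add_single_one, diffOp_add_single_one, pderiv_mul, (diffOp α).map_add,
      add_sub_assoc, map_add, Finsupp.degree_single]
    refine add_mem ?_ (Ideal.pow_le_pow_right (by omega) (ih (pderiv i g)))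
    rw [show m + 1 - (α.degree + 1) = m - α.degree by omega]
    exact diffOp_mem_pow_sub_degree (Ideal.mul_mem_right g _ (hs i)) α

theorem pderiv_mem_pow_of_aeval_mem_pow [P.IsMaximal] {m : ℕ} {q : Polynomial A}
    {s : MvPolynomial (Fin n) A} (hq : Polynomial.aeval s q ∈ P ^ (m + 1))
    (hq' : Polynomial.aeval s (Polynomial.derivative q) ∉ P) (j : Fin n) :
    pderiv j s ∈ P ^ m := by
  have h := (pderiv j).map_mem_pow hq
  rw [Derivation.map_aeval, smul_eq_mul] at h
  exact (Ideal.IsMaximal.mul_mem_pow P h).resolve_left hq'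

end DiffOp

section Homotopy

variable {A : Type*} [CommRing A] {n : ℕ}

noncomputable def homotopy (s : Fin n → MvPolynomial (Fin n) A) :
    MvPolynomial (Fin n) A →ₐ[A] Polynomial (MvPolynomial (Fin n) A) :=
  aeval fun i => Polynomial.C (s i) + Polynomial.X * Polynomial.C (X i - s i)

@[simp]
theorem homotopy_X (s : Fin n → MvPolynomial (Fin n) A) (i : Fin n) :
    homotopy s (X i) = Polynomial.C (s i) + Polynomial.X * Polynomial.C (X i - s i) :=
  aeval_X _ _

@[simp]
theorem homotopy_C (s : Fin n → MvPolynomial (Fin n) A) (a : A) :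
    homotopy s (C a) = Polynomial.C (C a) :=
  aeval_C _ _

theorem homotopy_eval_one (s : Fin n → MvPolynomial (Fin n) A) (f : MvPolynomial (Fin n) A) :
    (homotopy s f).eval 1 = f := by
  induction f using MvPolynomial.induction_on with
  | C a => simp
  | add p q hp hq => simp [hp, hq]
  | mul_X p i hp => simp [hp]

theorem homotopy_coeff_zero (s : Fin n → MvPolynomial (Fin n) A) (f : MvPolynomial (Fin n) A) :
    (homotopy s f).coeff 0 = aeval s f := by
  rw [Polynomial.coeff_zero_eq_eval_zero]
  induction f using MvPolynomial.induction_on with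
  | C a => simp
  | add p q hp hq => simp [hp, hq]
  | mul_X p i hp => simp [hp]

theorem derivative_homotopy (s : Fin n → MvPolynomial (Fin n) A) (f : MvPolynomial (Fin n) A) :
    Polynomial.derivative (homotopy s f) =
      ∑ i, Polynomial.C (X i - s i) * homotopy s (pderiv i f) := by
  induction f using MvPolynomial.induction_on with
  | C a => simp
  | add p q hp hq => simp only [map_add, hp, hq, mul_add, Finset.sum_add_distrib]
  | mul_X p i hp =>
    rw [map_mul, Polynomial.derivative_mul, hp, Finset.sum_mul]
    simp only [Derivation.leibniz, smul_eq_mul, map_add, map_mul, mul_add,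
      Finset.sum_add_distrib]
    have hX : ∑ j, Polynomial.C (X j - s j) * (homotopy s p * homotopy s (pderiv j (X i))) =
        homotopy s p * Polynomial.derivative (homotopy s (X i)) := by
      simp [pderiv_X, Pi.single_apply, mul_comm]
    rw [hX, add_comm]
    simp only [mul_assoc, mul_comm (homotopy s (X i))]

variable {P : Ideal (MvPolynomial (Fin n) A)} {s : Fin n → MvPolynomial (Fin n) A}

theorem homotopy_sub_C_mem (hs : ∀ i, X i - s i ∈ P) (f : MvPolynomial (Fin n) A) :
    homotopy s f - Polynomial.C f ∈ P.map Polynomial.C := by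
  rw [← Ideal.Quotient.eq_zero_iff_mem, map_sub, sub_eq_zero]
  let J := P.map (Polynomial.C : _ →+* Polynomial (MvPolynomial (Fin n) A))
  suffices (Ideal.Quotient.mkₐ A J).comp (homotopy s) =
      (Ideal.Quotient.mkₐ A J).comp (IsScalarTower.toAlgHom A _ _) from congr($this f)
  refine MvPolynomial.algHom_ext fun i => ?_
  simp only [AlgHom.comp_apply, Ideal.Quotient.mkₐ_eq_mk, homotopy, aeval_X,
    IsScalarTower.coe_toAlgHom', Polynomial.algebraMap_apply, Algebra.algebraMap_self,
    RingHom.id_apply, Ideal.Quotient.mk_eq_mk_iff_sub_mem]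
  rw [show Polynomial.C (s i) + Polynomial.X * Polynomial.C (X i - s i) - Polynomial.C (X i) =
      (Polynomial.X - 1) * Polynomial.C (X i - s i) by rw [map_sub]; ring]
  exact Ideal.mul_mem_left _ _ (Ideal.mem_map_of_mem _ (hs i))

theorem coeff_homotopy_mem_pow (hs : ∀ i, X i - s i ∈ P) {k : ℕ} {f : MvPolynomial (Fin n) A}
    (hf : f ∈ P ^ k) (j : ℕ) : (homotopy s f).coeff j ∈ P ^ k := by
  have hP : P.map (homotopy s) ≤ P.map Polynomial.C :=
    Ideal.map_le_iff_le_comap.2 fun g hg => by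
      simpa using add_mem (homotopy_sub_C_mem hs g) (Ideal.mem_map_of_mem _ hg)
  have hf' := Ideal.mem_map_of_mem (homotopy s) hf
  rw [Ideal.map_pow] at hf'
  have hmem := Ideal.pow_right_mono hP k hf'
  rw [← Ideal.map_pow] at hmem
  exact Ideal.mem_map_C_iff.1 hmem j

theorem sub_aeval_mem_pow_succ [Algebra ℚ A] (hs : ∀ i, X i - s i ∈ P) {k : ℕ}
    {f : MvPolynomial (Fin n) A} (hf : ∀ i, pderiv i f ∈ P ^ k) :
    f - aeval s f ∈ P ^ (k + 1) := by
  have h := Polynomial.eval_one_sub_coeff_zero_mem (J := P ^ (k + 1)) (q := homotopy s f)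
    fun j => by
      rw [derivative_homotopy, Polynomial.finsetSum_coeff]
      refine sum_mem fun i _ => ?_
      rw [Polynomial.coeff_C_mul, pow_succ']
      exact Ideal.mul_mem_mul (hs i) (coeff_homotopy_mem_pow hs (hf i) j)
  rwa [homotopy_eval_one, homotopy_coeff_zero] at h

theorem mem_pow_of_diffOp_mem [Algebra ℚ A] (hs : ∀ i, X i - s i ∈ P) {k : ℕ}
    (haeval : ∀ g ∈ P, aeval s g ∈ P ^ k) {g : MvPolynomial (Fin n) A}
    (hg : ∀ β : Fin n →₀ ℕ, β.degree < k → diffOp β g ∈ P) : g ∈ P ^ k := by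
  induction k generalizing g with
  | zero => simp
  | succ k ih =>
    have hgP : g ∈ P := by simpa using hg 0 (by simp)
    have hpderiv : ∀ i, pderiv i g ∈ P ^ k := fun i =>
      ih (fun g' hg' => Ideal.pow_le_pow_right k.le_succ (haeval g' hg')) fun β hβ => by
        rw [← diffOp_add_single_one]
        exact hg _ (by simpa using hβ)
    simpa using add_mem (sub_aeval_mem_pow_succ hs hpderiv) (haeval g hgP)

end Homotopy

section CoefficientField

variable {K : Type*} [Field K] {n : ℕ} {P : Ideal (MvPolynomial (Fin n) K)} {m : ℕ}
  {σ : (MvPolynomial (Fin n) K ⧸ P) →ₐ[K] MvPolynomial (Fin n) K ⧸ P ^ (m + 1)}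

theorem aeval_mem_pow_of_mk_pow_eq {s : Fin n → MvPolynomial (Fin n) K}
    (hs : ∀ i, Ideal.Quotient.mk (P ^ (m + 1)) (s i) = σ (Ideal.Quotient.mk P (X i)))
    {g : MvPolynomial (Fin n) K} (hg : g ∈ P) : aeval s g ∈ P ^ (m + 1) := by
  have h : (Ideal.Quotient.mkₐ K (P ^ (m + 1))).comp (aeval s) =
      σ.comp (Ideal.Quotient.mkₐ K P) :=
    algHom_ext fun i => by simpa using hs i
  rw [← Ideal.Quotient.eq_zero_iff_mem]
  simpa [Ideal.Quotient.eq_zero_iff_mem.2 hg] using congr($h g)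

variable [P.IsMaximal]

attribute [local instance] Ideal.Quotient.field

instance : Algebra.IsIntegral K (MvPolynomial (Fin n) K ⧸ P) :=
  ⟨MvPolynomial.quotient_mk_comp_C_isIntegral_of_isJacobsonRing P⟩

instance [CharZero K] : Algebra.FormallyEtale K (MvPolynomial (Fin n) K ⧸ P) :=
  Algebra.FormallyEtale.of_isSeparable K _

theorem pderiv_mem_pow_of_mk_pow_eq [CharZero K] {x : MvPolynomial (Fin n) K}
    (hx : Ideal.Quotient.mk (P ^ (m + 1)) x = σ (Ideal.Quotient.mk P x)) (j : Fin n) :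
    pderiv j x ∈ P ^ m := by
  set c := Ideal.Quotient.mk P x
  have hmk (J : Ideal (MvPolynomial (Fin n) K)) (q : Polynomial K) :
      Ideal.Quotient.mk J (Polynomial.aeval x q) = Polynomial.aeval (Ideal.Quotient.mk J x) q :=
    (Polynomial.aeval_algHom_apply (Ideal.Quotient.mkₐ K J) x q).symm
  refine pderiv_mem_pow_of_aeval_mem_pow (q := minpoly K c) ?_ (fun h => ?_) j
  · rw [← Ideal.Quotient.eq_zero_iff_mem, hmk, hx, Polynomial.aeval_algHom_apply, minpoly.aeval,
      map_zero]
  · refine (Algebra.IsSeparable.isSeparable K c).aeval_derivative_ne_zero (minpoly.aeval K c) ?_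
    rwa [← hmk, Ideal.Quotient.eq_zero_iff_mem]

theorem exists_flat_section [CharZero K] (m : ℕ) :
    ∃ s : MvPolynomial (Fin n) K ⧸ P → MvPolynomial (Fin n) K,
      (∀ c, Ideal.Quotient.mk P (s c) = c) ∧ (∀ c j, pderiv j (s c) ∈ P ^ m) ∧
      ∀ g ∈ P, aeval (fun i => s (Ideal.Quotient.mk P (X i))) g ∈ P ^ (m + 1) := by
  obtain ⟨σ, hσ⟩ := Ideal.exists_algHom_lift_quotient_pow (K := K) P m
  choose s hs using fun c => Ideal.Quotient.mk_surjective (σ c)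
  have hs_mk (c : MvPolynomial (Fin n) K ⧸ P) : Ideal.Quotient.mk P (s c) = c := by
    simpa [hσ] using congrArg (Ideal.Quotient.factor (Ideal.pow_le_self m.succ_ne_zero)) (hs c)
  exact ⟨s, hs_mk, fun c => pderiv_mem_pow_of_mk_pow_eq (σ := σ) (by rw [hs_mk, hs]),
    fun g => aeval_mem_pow_of_mk_pow_eq fun i => hs _⟩

end CoefficientField

section Taylor

variable {A : Type*} [CommRing A] {n : ℕ} (P : Ideal (MvPolynomial (Fin n) A)) (m : ℕ)

noncomputable def degreeLt : Finset (Fin n →₀ ℕ) :=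
  (Finsupp.finite_of_degree_lt m).toFinset

noncomputable def taylorCoeffs :
    MvPolynomial (Fin n) A →+ ((Fin n →₀ ℕ) →₀ MvPolynomial (Fin n) A ⧸ P) :=
  ∑ α ∈ degreeLt m, (Finsupp.singleAddHom α).comp
    ((Ideal.Quotient.mk P).toAddMonoidHom.comp (diffOp α).toAddMonoidHom)

theorem taylorCoeffs_apply (g : MvPolynomial (Fin n) A) :
    taylorCoeffs P m g =
      ∑ α ∈ degreeLt m, Finsupp.single α (Ideal.Quotient.mk P (diffOp α g)) := by
  simp [taylorCoeffs]

theorem diffOp_mem_of_taylorCoeffs_eq_zero {g : MvPolynomial (Fin n) A}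
    (hg : taylorCoeffs P m g = 0) {β : Fin n →₀ ℕ} (hβ : β.degree < m) :
    diffOp β g ∈ P := by
  rw [← Ideal.Quotient.eq_zero_iff_mem]
  simpa [taylorCoeffs_apply, Finsupp.finsetSum_apply, Finsupp.single_apply, degreeLt, hβ]
    using congr($hg β)

theorem taylorCoeffs_mul {s : MvPolynomial (Fin n) A} (hs : ∀ j, pderiv j s ∈ P ^ m)
    (g : MvPolynomial (Fin n) A) :
    taylorCoeffs P m (s * g) = Ideal.Quotient.mk P s • taylorCoeffs P m g := by
  simp only [taylorCoeffs_apply, Finset.smul_sum, Finsupp.smul_single, smul_eq_mul]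
  refine Finset.sum_congr rfl fun α hα => congrArg _ ?_
  rw [← map_mul, Ideal.Quotient.mk_eq_mk_iff_sub_mem]
  have hα : α.degree < m := by simpa [degreeLt] using hα
  exact Ideal.pow_le_self (by omega) (diffOp_mul_sub_mem hs α g)

theorem exists_taylorCoeffs_eq_of_mem_span
    {s : MvPolynomial (Fin n) A ⧸ P → MvPolynomial (Fin n) A}
    (hs_mk : ∀ c, Ideal.Quotient.mk P (s c) = c) (hs : ∀ c j, pderiv j (s c) ∈ P ^ m)
    {I : Ideal (MvPolynomial (Fin n) A)}
    {v : (Fin n →₀ ℕ) →₀ MvPolynomial (Fin n) A ⧸ P}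
    (hv : v ∈ Submodule.span (MvPolynomial (Fin n) A ⧸ P) (taylorCoeffs P m '' I)) :
    ∃ g ∈ I, taylorCoeffs P m g = v := by
  induction hv using Submodule.span_induction with
  | mem v hv => exact hv
  | zero => exact ⟨0, I.zero_mem, map_zero _⟩
  | add v w _ _ hv hw =>
    obtain ⟨g, hg, rfl⟩ := hv
    obtain ⟨h, hh, rfl⟩ := hw
    exact ⟨g + h, I.add_mem hg hh, map_add _ _ _⟩
  | smul c v _ hv =>
    obtain ⟨g, hg, rfl⟩ := hv
    exact ⟨s c * g, I.mul_mem_left _ hg, by rw [taylorCoeffs_mul P m (hs c), hs_mk]⟩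

end Taylor

section Pairing

variable {K : Type*} [Field K] {n : ℕ} (P : Ideal (MvPolynomial (Fin n) K))

theorem lpair_eq_linearCombination (D : (Fin n →₀ ℕ) →₀ MvPolynomial (Fin n) K ⧸ P)
    (f : MvPolynomial (Fin n) K) :
    lpair P D f =
      Finsupp.linearCombination _ (fun α => Ideal.Quotient.mk P (diffOp α f)) D := by
  simp [lpair, Finsupp.linearCombination_apply]

theorem lpair_eq_zero_of_mem_span {S : Set ((Fin n →₀ ℕ) →₀ MvPolynomial (Fin n) K ⧸ P)}
    {f : MvPolynomial (Fin n) K} (hS : ∀ D ∈ S, lpair P D f = 0)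
    {D : (Fin n →₀ ℕ) →₀ MvPolynomial (Fin n) K ⧸ P}
    (hD : D ∈ Submodule.span (MvPolynomial (Fin n) K ⧸ P) S) : lpair P D f = 0 := by
  simp only [lpair_eq_linearCombination] at hS ⊢
  exact (Submodule.span_le (p := LinearMap.ker _).2 hS) hD

theorem mk_wAct (N : (Fin n →₀ ℕ) →₀ MvPolynomial (Fin n) K)
    (f : MvPolynomial (Fin n) K) :
    Ideal.Quotient.mk P (wAct N f) =
      lpair P (N.mapRange (Ideal.Quotient.mk P) (map_zero _)) f := by
  rw [wAct, lpair, map_finsuppSum, Finsupp.sum_mapRange_index fun _ => by simp]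
  simp

theorem exists_lpair_eq_comp_taylorCoeffs (m : ℕ)
    (φ : Module.Dual (MvPolynomial (Fin n) K ⧸ P)
      ((Fin n →₀ ℕ) →₀ MvPolynomial (Fin n) K ⧸ P)) :
    ∃ D, ∀ g, lpair P D g = φ (taylorCoeffs P m g) := by
  refine ⟨∑ α ∈ degreeLt m, Finsupp.single α (φ (Finsupp.single α 1)), fun g => ?_⟩
  simp only [lpair_eq_linearCombination, taylorCoeffs_apply, map_sum,
    Finsupp.linearCombination_single, smul_eq_mul]
  refine Finset.sum_congr rfl fun α _ => ?_
  rw [← Finsupp.smul_single_one _ (Ideal.Quotient.mk P (diffOp α g)), map_smul, smul_eq_mul,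
    mul_comm]

end Pairing

theorem mem_of_forall_localDual_lpair_eq_zero {K : Type*} [Field K] [CharZero K] {n : ℕ}
    {P I : Ideal (MvPolynomial (Fin n) K)} (hP : P.IsMaximal) {m : ℕ} (hm : P ^ m ≤ I)
    {f : MvPolynomial (Fin n) K} (hf : ∀ D ∈ localDual P I, lpair P D f = 0) : f ∈ I := by
  obtain ⟨s, hs_mk, hs_pderiv, hs_aeval⟩ := exists_flat_section (P := P) m
  let := Ideal.Quotient.field P
  have hf_span : taylorCoeffs P m f ∈
      Submodule.span (MvPolynomial (Fin n) K ⧸ P) (taylorCoeffs P m '' I) := by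
    by_contra hnot
    obtain ⟨φ, hφf, hφI⟩ := Submodule.exists_dual_map_eq_bot_of_notMem hnot inferInstance
    obtain ⟨D, hD⟩ := exists_lpair_eq_comp_taylorCoeffs P m φ
    refine hφf (hD f ▸ hf D fun g hg => ?_)
    rw [hD, ← LinearMap.mem_ker]
    exact LinearMap.le_ker_iff_map.2 hφI (Submodule.subset_span ⟨g, hg, rfl⟩)
  obtain ⟨g, hg, hfg⟩ := exists_taylorCoeffs_eq_of_mem_span P m hs_mk hs_pderiv hf_span
  have hsub : f - g ∈ P ^ m := by
    refine mem_pow_of_diffOp_mem (s := fun i => s (Ideal.Quotient.mk P (X i)))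
      (fun i => by rw [← Ideal.Quotient.mk_eq_mk_iff_sub_mem, hs_mk])
      (fun x hx => Ideal.pow_le_pow_right m.le_succ (hs_aeval x hx)) fun β hβ => ?_
    exact diffOp_mem_of_taylorCoeffs_eq_zero P m (by rw [map_sub, hfg, sub_self]) hβ
  simpa using I.add_mem (hm hsub) hg

end NoetherianOperators

open NoetherianOperators in
theorem span_localDual_gives_noetherian_operators_general
    (K : Type*) [Field K] [CharZero K] (n : ℕ)
    (P I : Ideal (MvPolynomial (Fin n) K)) (hP : P.IsMaximal)
    (hrad : I.radical = P)
    {ι : Type*}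
    (Dfam : ι → ((Fin n →₀ ℕ) →₀ (MvPolynomial (Fin n) K ⧸ P)))
    (hspan : (Submodule.span (MvPolynomial (Fin n) K ⧸ P) (Set.range Dfam) :
      Set ((Fin n →₀ ℕ) →₀ (MvPolynomial (Fin n) K ⧸ P))) = localDual P I)
    (N : ι → ((Fin n →₀ ℕ) →₀ MvPolynomial (Fin n) K))
    (hpre : ∀ i, (N i).mapRange (Ideal.Quotient.mk P) (map_zero _) = Dfam i) :
    ∀ f : MvPolynomial (Fin n) K, f ∈ I ↔ ∀ i, wAct (N i) f ∈ P := by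
  have hlpair (i : ι) (f : MvPolynomial (Fin n) K) :
      lpair P (Dfam i) f = Ideal.Quotient.mk P (wAct (N i) f) := by
    rw [← hpre i, mk_wAct]
  have hDfam (i : ι) : Dfam i ∈ localDual P I := hspan ▸ Submodule.subset_span ⟨i, rfl⟩
  intro f
  refine ⟨fun hf i => Ideal.Quotient.eq_zero_iff_mem.1 (hlpair i f ▸ hDfam i f hf),
    fun hN => ?_⟩
  obtain ⟨m, hm⟩ := Ideal.exists_radical_pow_le_of_fg I (hrad ▸ IsNoetherian.noetherian P)
  refine mem_of_forall_localDual_lpair_eq_zero hP (hrad ▸ hm) fun D hD => ?_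
  refine lpair_eq_zero_of_mem_span P ?_ (hspan.symm ▸ hD : D ∈ _)
  rintro _ ⟨i, rfl⟩
  rw [hlpair, Ideal.Quotient.eq_zero_iff_mem]
  exact hN i

/-- Let `P ⊆ R = K[x₁,…,xₙ]` be maximal and `I` a `P`-primary ideal. If
`D₁,…` span the local dual space `D_P[I]` as a `κ(P)`-vector space, then any preimages
`N₁,… ∈ W_R` of the `D_i` under `W_R → W_{κ(P)}` are Noetherian operators for `I`:
for all `f ∈ R`, `f ∈ I ⟺ ∀ i, N_i • f ∈ P`. -/
theorem span_localDual_gives_noetherian_operators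
    (K : Type*) [Field K] [CharZero K] (n : ℕ)
    (P I : Ideal (MvPolynomial (Fin n) K)) (hP : P.IsMaximal)
    (hI : I.IsPrimary) (hrad : I.radical = P)
    {ι : Type*}
    (Dfam : ι → ((Fin n →₀ ℕ) →₀ (MvPolynomial (Fin n) K ⧸ P)))
    (hspan : (Submodule.span (MvPolynomial (Fin n) K ⧸ P) (Set.range Dfam) :
      Set ((Fin n →₀ ℕ) →₀ (MvPolynomial (Fin n) K ⧸ P))) = localDual P I)
    (N : ι → ((Fin n →₀ ℕ) →₀ MvPolynomial (Fin n) K))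
    (hpre : ∀ i, (N i).mapRange (Ideal.Quotient.mk P) (map_zero _) = Dfam i) :
    ∀ f : MvPolynomial (Fin n) K, f ∈ I ↔ ∀ i, wAct (N i) f ∈ P :=
  span_localDual_gives_noetherian_operators_general K n P I hP hrad Dfam hspan N hpre
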